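/- arXiv:1410.6839 — 3 statements merged into one kernel-verified Lean document; each statement's English description precedes it below -/
import Mathlib

section
/- Let G be a finite group and H ≤ K ≤ G. If H is an HC-subgroup of G, then H is an HC-subgroup of K. -/
def IsHCSubgroup {G : Type*} [Group G] (H : Subgroup G) : Prop :=
  ∃ T : Subgroup G, T.Normal ∧ H ⊔ T = ⊤ ∧
    ∀ g : G, Subgroup.map (MulAut.conj g).toMonoidHom H ⊓ (T ⊓ Subgroup.normalizer (H : Set G)) ≤ H

/-!
Intersect the supplement with `K`: if `G = HT` with `T` normal and `H ≤ K`, then `K = H (T ∩ K)`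
by Dedekind's modular law, and `T ∩ K` is normal in `K`. The intersection condition for `K`
is the one for `G` restricted to elements of `K`, since conjugation by an element of `K` and
the normalizer of `H` both commute with passing from `G` to `K`.
-/

namespace Subgroup

open scoped Pointwise

variable {G : Type*} [Group G]

theorem sup_inf_assoc_of_le_of_normal {H K : Subgroup G} (T : Subgroup G) [T.Normal]
    (hHK : H ≤ K) : (H ⊔ T) ⊓ K = H ⊔ T ⊓ K := by
  refine le_antisymm (fun x hx => ?_)
    (sup_le (le_inf le_sup_left hHK) (inf_le_inf_right K le_sup_right))
  have hx' : x ∈ (H : Set G) * ((T ⊓ K : Subgroup G) : Set G) := by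
    rw [mul_inf_assoc H T K hHK, ← mul_normal]
    exact hx
  obtain ⟨h, hh, t, ht, rfl⟩ := hx'
  exact mul_mem_sup hh ht

theorem subgroupOf_sup_eq_top_of_normal {H K T : Subgroup G} [T.Normal] (hHK : H ≤ K)
    (hHT : H ⊔ T = ⊤) : H.subgroupOf K ⊔ T.subgroupOf K = ⊤ := by
  rw [← inf_subgroupOf_right T K, ← subgroupOf_sup hHK inf_le_right, subgroupOf_eq_top,
    ← sup_inf_assoc_of_le_of_normal T hHK, hHT, top_inf_eq]

theorem map_conj_subgroupOf (H : Subgroup G) {K : Subgroup G} (g : K) :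
    (H.subgroupOf K).map (MulAut.conj g).toMonoidHom =
      (H.map (MulAut.conj (g : G)).toMonoidHom).subgroupOf K := by
  ext x
  simp only [mem_map, mem_subgroupOf]
  constructor
  · rintro ⟨y, hy, rfl⟩
    exact ⟨y, hy, rfl⟩
  · rintro ⟨y, hy, hyx⟩
    have hyK : y ∈ K := by
      have hy_eq : y = (g : G)⁻¹ * x * g := by
        rw [← hyx, MulEquiv.coe_toMonoidHom, MulAut.conj_apply]
        group
      rw [hy_eq]
      exact mul_mem (mul_mem (inv_mem g.2) x.2) g.2
    exact ⟨⟨y, hyK⟩, hy, Subtype.ext hyx⟩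

end Subgroup

theorem hcSubgroup_of_le_general {G : Type*} [Group G] (H K : Subgroup G)
    (hHK : H ≤ K) (hH : IsHCSubgroup H) : IsHCSubgroup (H.subgroupOf K) := by
  obtain ⟨T, hTn, hHT, hconj⟩ := hH
  refine ⟨T.subgroupOf K, hTn.subgroupOf K,
    Subgroup.subgroupOf_sup_eq_top_of_normal hHK hHT, fun g => ?_⟩
  rw [Subgroup.map_conj_subgroupOf, ← Subgroup.subgroupOf_normalizer_eq hHK]
  exact Subgroup.comap_mono (hconj g)

theorem hcSubgroup_of_le {G : Type*} [Group G] [Finite G] (H K : Subgroup G)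
    (hHK : H ≤ K) (hH : IsHCSubgroup H) : IsHCSubgroup (H.subgroupOf K) :=
  hcSubgroup_of_le_general H K hHK hH
end

section
/- Let G be a finite group, N a normal subgroup of G, and H a subgroup of G with N ≤ H. Then H is an HC-subgroup of G if and only if H/N is an HC-subgroup of G/N. -/
namespace Subgroup

variable {G Q : Type*} [Group G] [Group Q]

def IsHCSupplement (H T : Subgroup G) : Prop :=
  T.Normal ∧ H ⊔ T = ⊤ ∧
    ∀ g : G, H.map (MulAut.conj g).toMonoidHom ⊓ (T ⊓ normalizer (H : Set G)) ≤ H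

theorem isHCSubgroup_iff_exists_isHCSupplement {H : Subgroup G} :
    IsHCSubgroup H ↔ ∃ T, H.IsHCSupplement T :=
  Iff.rfl

theorem Normal.le_map_conj {K H : Subgroup G} (hK : K.Normal) (hKH : K ≤ H) (g : G) :
    K ≤ H.map (MulAut.conj g).toMonoidHom := fun k hk =>
  ⟨g⁻¹ * k * g, hKH (by simpa using hK.conj_mem k hk g⁻¹), by simp [mul_assoc]⟩

theorem IsHCSupplement.sup_normal {H T K : Subgroup G} (hT : H.IsHCSupplement T) (hK : K.Normal)
    (hKH : K ≤ H) : H.IsHCSupplement (T ⊔ K) := by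
  obtain ⟨hTn, hHT, hcond⟩ := hT
  refine ⟨Subgroup.sup_normal T K, top_unique (hHT ▸ sup_le_sup_left le_sup_left H), ?_⟩
  rintro g x ⟨hxHg, hxTK, hxN⟩
  obtain ⟨t, ht, k, hk, rfl⟩ := mem_sup_of_normal_right.mp hxTK
  have hkN : k ∈ normalizer (H : Set G) := le_normalizer (hKH hk)
  have htH : t ∈ H := by
    refine hcond g ⟨?_, ht, ?_⟩ <;> rw [← mul_inv_cancel_right t k]
    · exact Subgroup.mul_mem _ hxHg (Subgroup.inv_mem _ (hK.le_map_conj hKH g hk))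
    · exact Subgroup.mul_mem _ hxN (Subgroup.inv_mem _ hkN)
  exact mul_mem htH (hKH hk)

theorem map_map_conj (f : G →* Q) (H : Subgroup G) (g : G) :
    (H.map f).map (MulAut.conj (f g)).toMonoidHom = (H.map (MulAut.conj g).toMonoidHom).map f := by
  simp only [map_map]
  congr 1
  ext x
  simp [MulAut.conj_apply]

theorem comap_map_conj_map_eq {f : G →* Q} {H : Subgroup G} (hH : f.ker ≤ H) (g : G) :
    ((H.map f).map (MulAut.conj (f g)).toMonoidHom).comap f = H.map (MulAut.conj g).toMonoidHom := by
  rw [map_map_conj, comap_map_eq_self (f.normal_ker.le_map_conj hH g)]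

theorem comap_normalizer_map_eq {f : G →* Q} (hf : Function.Surjective f) {H : Subgroup G}
    (hH : f.ker ≤ H) : (normalizer ((H.map f : Subgroup Q) : Set Q)).comap f =
      normalizer (H : Set G) := by
  rw [comap_normalizer_eq_of_surjective _ hf, comap_map_eq_self hH]

theorem sup_comap_eq_comap_map_sup {f : G →* Q} (hf : Function.Surjective f) {H : Subgroup G}
    (hH : f.ker ≤ H) (T' : Subgroup Q) : H ⊔ T'.comap f = (H.map f ⊔ T').comap f := by
  rw [← comap_sup_eq f (H.map f) T' hf, comap_map_eq_self hH]

theorem isHCSupplement_comap_iff {f : G →* Q} (hf : Function.Surjective f) {H : Subgroup G}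
    (hH : f.ker ≤ H) {T' : Subgroup Q} :
    H.IsHCSupplement (T'.comap f) ↔ (H.map f).IsHCSupplement T' := by
  have hcond (g : G) :
      H.map (MulAut.conj g).toMonoidHom ⊓ (T'.comap f ⊓ normalizer (H : Set G)) ≤ H ↔
        (H.map f).map (MulAut.conj (f g)).toMonoidHom ⊓
          (T' ⊓ normalizer ((H.map f : Subgroup Q) : Set Q)) ≤ H.map f := by
    rw [← comap_le_comap_of_surjective hf, comap_map_eq_self hH, comap_inf, comap_inf,
      comap_map_conj_map_eq hH, comap_normalizer_map_eq hf hH]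
  unfold IsHCSupplement
  rw [normal_comap_iff_of_surjective hf, sup_comap_eq_comap_map_sup hf hH,
    ← comap_top f, (comap_injective hf).eq_iff, forall_congr' hcond, hf.forall]

end Subgroup

open Subgroup in
theorem hcSubgroup_quotient_iff_general {G : Type*} [Group G] (N H : Subgroup G)
    [N.Normal] (hNH : N ≤ H) :
    IsHCSubgroup H ↔ IsHCSubgroup (H.map (QuotientGroup.mk' N)) := by
  have hf := QuotientGroup.mk'_surjective N
  have hker : (QuotientGroup.mk' N).ker ≤ H := (QuotientGroup.ker_mk' N).trans_le hNH
  simp only [isHCSubgroup_iff_exists_isHCSupplement]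
  constructor
  · rintro ⟨T, hT⟩
    refine ⟨T.map (QuotientGroup.mk' N), (isHCSupplement_comap_iff hf hker).mp ?_⟩
    rw [comap_map_eq]
    exact hT.sup_normal (MonoidHom.normal_ker _) hker
  · rintro ⟨T', hT'⟩
    exact ⟨_, (isHCSupplement_comap_iff hf hker).mpr hT'⟩

theorem hcSubgroup_quotient_iff {G : Type*} [Group G] [Finite G] (N H : Subgroup G)
    [N.Normal] (hNH : N ≤ H) :
    IsHCSubgroup H ↔ IsHCSubgroup (H.map (QuotientGroup.mk' N)) :=
  hcSubgroup_quotient_iff_general N H hNH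
end

section
/- Let G be a finite group, p a prime, and H a p-subgroup of G. If H is an HC-subgroup of G but H is not an H-subgroup of G, then G has a normal subgroup M such that |G : M| = p and G = HM. -/
def IsHSubgroup {G : Type*} [Group G] (H : Subgroup G) : Prop :=
  ∀ g : G, Subgroup.map (MulAut.conj g).toMonoidHom H ⊓ Subgroup.normalizer (H : Set G) ≤ H

/-!
The supplement `T` of an HC-subgroup `H` is proper, since for `T = G` the HC-condition is the
H-condition. As `G = HT`, the quotient `G/T` is an image of the `p`-group `H`, hence a nontrivial
`p`-group, which has a normal subgroup of index `p`; its preimage `M` contains `T`, so `G = HM`.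
-/

theorem IsHCSubgroup.exists_normal_sup_eq_top_ne_top {G : Type*} [Group G] {H : Subgroup G}
    (hHC : IsHCSubgroup H) (hnH : ¬ IsHSubgroup H) :
    ∃ T : Subgroup G, T.Normal ∧ H ⊔ T = ⊤ ∧ T ≠ ⊤ := by
  obtain ⟨T, hTn, hHT, hcond⟩ := hHC
  refine ⟨T, hTn, hHT, ?_⟩
  rintro rfl
  exact hnH fun g => by simpa using hcond g

theorem IsPGroup.exists_normal_index_eq {p : ℕ} [Fact p.Prime] {Q : Type*} [Group Q] [Finite Q]
    [Nontrivial Q] (hQ : IsPGroup p Q) : ∃ K : Subgroup Q, K.Normal ∧ K.index = p := by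
  have hp : p.Prime := Fact.out
  obtain ⟨n, hn, hcard⟩ := hQ.nontrivial_iff_card.mp ‹_›
  obtain ⟨K, hK⟩ := Sylow.exists_subgroup_card_pow_prime p (n := n - 1)
    (hcard ▸ pow_dvd_pow p (n.sub_le 1))
  have hKindex : K.index = p := by
    have hmul := K.index_mul_card
    rw [hK, hcard, ← Nat.sub_add_cancel hn, pow_succ', Nat.add_sub_cancel] at hmul
    exact Nat.eq_of_mul_eq_mul_right (pow_pos hp.pos _) hmul
  refine ⟨K, K.normal_of_index_eq_minFac_card ?_, hKindex⟩
  rw [hcard, hp.pow_minFac hn.ne', hKindex]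

theorem IsPGroup.quotient_of_sup_eq_top {p : ℕ} {G : Type*} [Group G] {H T : Subgroup G}
    [T.Normal] (hH : IsPGroup p H) (hHT : H ⊔ T = ⊤) : IsPGroup p (G ⧸ T) := by
  have hmap : H.map (QuotientGroup.mk' T) = ⊤ := by
    rw [← sup_bot_eq (H.map _), ← QuotientGroup.map_mk'_self T, ← Subgroup.map_sup, hHT,
      Subgroup.map_top_of_surjective _ (QuotientGroup.mk'_surjective T)]
  exact (hmap ▸ hH.map (QuotientGroup.mk' T)).of_equiv Subgroup.topEquiv

theorem exists_normal_index_eq_sup_eq_top_of_isPGroup {p : ℕ} [Fact p.Prime] {G : Type*}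
    [Group G] [Finite G] {H T : Subgroup G} [T.Normal] (hH : IsPGroup p H) (hHT : H ⊔ T = ⊤)
    (hT : T ≠ ⊤) : ∃ M : Subgroup G, M.Normal ∧ M.index = p ∧ H ⊔ M = ⊤ := by
  have : Nontrivial (G ⧸ T) := QuotientGroup.nontrivial_iff.mpr hT
  obtain ⟨K, hKn, hKindex⟩ := (hH.quotient_of_sup_eq_top hHT).exists_normal_index_eq
  refine ⟨K.comap (QuotientGroup.mk' T), hKn.comap _, ?_, ?_⟩
  · rwa [Subgroup.index_comap_of_surjective _ (QuotientGroup.mk'_surjective T)]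
  · have hTK : T ≤ K.comap (QuotientGroup.mk' T) :=
      (QuotientGroup.ker_mk' T).ge.trans (MonoidHom.ker_le_comap _ K)
    exact top_le_iff.mp (hHT ▸ sup_le_sup_left hTK H)

theorem hcSubgroup_not_hSubgroup_index_p {G : Type*} [Group G] [Finite G] (p : ℕ)
    (hp : p.Prime) (H : Subgroup G) (hHp : IsPGroup p H)
    (hHC : IsHCSubgroup H) (hnH : ¬ IsHSubgroup H) :
    ∃ M : Subgroup G, M.Normal ∧ M.index = p ∧ H ⊔ M = ⊤ := by
  have : Fact p.Prime := ⟨hp⟩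
  obtain ⟨T, hTn, hHT, hT⟩ := hHC.exists_normal_sup_eq_top_ne_top hnH
  exact exists_normal_index_eq_sup_eq_top_of_isPGroup hHp hHT hT
end
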